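/- arXiv:0710.5931 — 3 statements merged into one kernel-verified Lean document; each statement's English description precedes it below -/
import Mathlib

section
/- If f is a formal power series with f(0) = 1 satisfying f(z) = 1 + z f(z)^{s+1} for a positive integer s, then the k-th coefficient of f equals the Fuss-Catalan number (1/(sk+1)) * C(sk+k, k). -/
open Finset PowerSeries

/-- Auxiliary: generalized Fuss-Catalan numbers as rationals. -/
def fcB (s n r : ℕ) : ℚ := r / ((s+1)*n + r) * (((s+1)*n + r).choose n)

lemma fcB_pascal (s n r : ℕ) :
    fcB s (n+1) (r+1) = fcB s (n+1) r + fcB s n (r+(s+1)) := by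
  have e1 : (s+1)*(n+1) + (r+1) = (s*n+s+n+r+1)+1 := by ring
  have e2 : (s+1)*(n+1) + r = s*n+s+n+r+1 := by ring
  have e3 : (s+1)*n + (r+(s+1)) = s*n+s+n+r+1 := by ring
  set E := s*n+s+n+r+1 with hE
  unfold fcB
  rw [e1, e2, e3]
  have hp : (E+1).choose (n+1) = E.choose n + E.choose (n+1) := Nat.choose_succ_succ E n
  have hq : E.choose (n+1) * (n+1) = E.choose n * (E - n) := Nat.choose_succ_right_eq E n
  have hEn : E - n = s*n+s+r+1 := by omega
  rw [hEn] at hq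
  have hq' : (E.choose (n+1) : ℚ) * ((n:ℚ)+1)
      = (E.choose n : ℚ) * ((s:ℚ)*n+s+r+1) := by exact_mod_cast hq
  have hE0 : ((E:ℚ)) ≠ 0 := by
    have : 0 < E := by omega
    exact_mod_cast this.ne'
  have hE1 : ((E:ℚ)+1) ≠ 0 := by positivity
  rw [hp]
  push_cast
  field_simp
  linear_combination ((s:ℚ)*n+s+n+r+1) * ((s:ℚ)+1) * hq'

lemma coeff_pow_eq (s : ℕ) (f : PowerSeries ℚ)
    (h0 : PowerSeries.constantCoeff f = 1)
    (hf : f = 1 + PowerSeries.X * f ^ (s + 1)) :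
    ∀ n r : ℕ, 1 ≤ n + r → PowerSeries.coeff n (f ^ r) = fcB s n r := by
  intro n
  induction n with
  | zero =>
    intro r hr
    have hr1 : (r:ℚ) ≠ 0 := by exact_mod_cast (by omega : r ≠ 0)
    rw [coeff_zero_eq_constantCoeff, map_pow, h0, one_pow]
    simp [fcB, div_self hr1]
  | succ n ih =>
    intro r
    induction r with
    | zero =>
      intro _
      simp [fcB, PowerSeries.coeff_one]
    | succ r ihr =>
      intro _
      have e : f ^ (r+1) = f ^ r + PowerSeries.X * f ^ (r+(s+1)) := by
        calc f^(r+1) = f^r * (1 + PowerSeries.X * f^(s+1)) := by rw [← hf, pow_succ]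
        _ = f ^ r + PowerSeries.X * f ^ (r+(s+1)) := by ring
      rw [e, map_add, PowerSeries.coeff_succ_X_mul,
        ihr (by omega), ih (r+(s+1)) (by omega), fcB_pascal]

theorem coeff_of_fuss_catalan_series (s : ℕ) (hs : 0 < s) (f : PowerSeries ℚ)
    (h0 : PowerSeries.constantCoeff f = 1)
    (hf : f = 1 + PowerSeries.X * f ^ (s + 1)) (k : ℕ) :
    PowerSeries.coeff k f = 1 / (s * k + 1) * (Nat.choose (s * k + k) k) := by
  have h := coeff_pow_eq s f h0 hf k 1 (by omega)
  rw [pow_one] at h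
  rw [h]
  unfold fcB
  have e : (s+1)*k+1 = (s*k+k)+1 := by ring
  rw [e]
  have key : (s*k+k).choose k * ((s*k+k) + 1) = ((s*k+k)+1).choose k * ((s*k+k) + 1 - k) :=
    Nat.choose_mul_succ_eq (s*k+k) k
  have e2 : (s*k+k) + 1 - k = s*k+1 := by omega
  rw [e2] at key
  have key' : ((s*k+k).choose k : ℚ) * ((s:ℚ)*k+k+1)
      = (((s*k+k)+1).choose k : ℚ) * ((s:ℚ)*k+1) := by exact_mod_cast key
  have h1 : ((s:ℚ)*k+k+1) ≠ 0 := by positivity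
  have h2 : ((s:ℚ)*k+1) ≠ 0 := by positivity
  push_cast
  field_simp
  linarith [key']
end

section
/- For all natural numbers p ≥ 1, (1/((1/2)(2p-1)+1)) * C((3/2)(2p-1), 2p-1) = (2^{-4p+3} p / ((6p-1)(2p+1))) * (p! (6p)!) / ((2p)! (2p)! (3p)!), where C(α,k) is the generalized binomial coefficient. -/
open Finset

/-- Generalized binomial coefficient `C(α, k) = α(α-1)⋯(α-k+1)/k!` for real `α`. -/
noncomputable def genChoose (α : ℝ) (k : ℕ) : ℝ :=
  (∏ i ∈ Finset.range k, (α - i)) / (Nat.factorial k)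

lemma oddProd (a b : ℕ) :
    ∏ i ∈ Finset.range b, (2 * (a : ℝ) + 1 + 2 * i) =
      (Nat.factorial (2 * (a + b)) * Nat.factorial a * 2 ^ a) /
        (Nat.factorial (a + b) * Nat.factorial (2 * a) * 2 ^ (a + b)) := by
  induction b with
  | zero =>
    have h1 : ((Nat.factorial (2 * a)) : ℝ) ≠ 0 := Nat.cast_ne_zero.mpr (Nat.factorial_ne_zero _)
    have h2 : ((Nat.factorial a) : ℝ) ≠ 0 := Nat.cast_ne_zero.mpr (Nat.factorial_ne_zero _)
    simp only [Finset.range_zero, Finset.prod_empty, Nat.add_zero]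
    field_simp
  | succ b ih =>
    rw [Finset.prod_range_succ, ih]
    have e1 : 2 * (a + (b + 1)) = (2 * (a + b) + 1) + 1 := by ring
    have e2 : a + (b + 1) = (a + b) + 1 := by ring
    rw [e1, e2, Nat.factorial_succ, Nat.factorial_succ, Nat.factorial_succ]
    have h1 : ((Nat.factorial (2 * (a + b))) : ℝ) ≠ 0 := Nat.cast_ne_zero.mpr (Nat.factorial_ne_zero _)
    have h2 : ((Nat.factorial (a + b)) : ℝ) ≠ 0 := Nat.cast_ne_zero.mpr (Nat.factorial_ne_zero _)
    have h3 : ((Nat.factorial a) : ℝ) ≠ 0 := Nat.cast_ne_zero.mpr (Nat.factorial_ne_zero _)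
    have h4 : ((Nat.factorial (2 * a)) : ℝ) ≠ 0 := Nat.cast_ne_zero.mpr (Nat.factorial_ne_zero _)
    have h5 : ((a : ℝ) + b + 1) ≠ 0 := by positivity
    push_cast
    field_simp
    ring

theorem odd_moments_free_bessel_half (p : ℕ) (hp : 1 ≤ p) :
    (1 : ℝ) / ((1 / 2) * (2 * p - 1) + 1) * genChoose ((3 / 2) * (2 * p - 1)) (2 * p - 1) =
      (2 : ℝ) ^ (-4 * (p : ℤ) + 3) * p / ((6 * p - 1) * (2 * p + 1)) *
        ((Nat.factorial p) * (Nat.factorial (6 * p))) /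
          ((Nat.factorial (2 * p)) * (Nat.factorial (2 * p)) * (Nat.factorial (3 * p))) := by
  obtain ⟨q, rfl⟩ : ∃ q, p = q + 1 := ⟨p - 1, by omega⟩
  rw [show 2 * (q + 1) - 1 = 2 * q + 1 from by omega]
  unfold genChoose
  -- reflect the product
  have hrefl : ∏ i ∈ Finset.range (2 * q + 1), ((3 / 2) * (2 * ((q + 1 : ℕ) : ℝ) - 1) - i) =
      ∏ i ∈ Finset.range (2 * q + 1), (2 * ((q + 1 : ℕ) : ℝ) + 1 + 2 * i) / 2 := by
    rw [← Finset.prod_range_reflect]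
    refine Finset.prod_congr rfl fun i hi => ?_
    have hi' : i ≤ 2 * q := by
      have := Finset.mem_range.mp hi; omega
    rw [show 2 * q + 1 - 1 - i = 2 * q - i from by omega]
    rw [Nat.cast_sub hi']
    push_cast
    ring
  rw [hrefl]
  rw [Finset.prod_div_distrib, Finset.prod_const, Finset.card_range, oddProd (q + 1) (2 * q + 1)]
  -- rewrite factorials
  rw [show (q + 1) + (2 * q + 1) = 3 * q + 2 from by omega]
  rw [show 2 * (3 * q + 2) = 6 * q + 4 from by omega]
  rw [show 6 * (q + 1) = (6 * q + 4) + 1 + 1 from by omega]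
  rw [show 3 * (q + 1) = (3 * q + 2) + 1 from by omega]
  rw [show 2 * (q + 1) = (2 * q + 1) + 1 from by omega]
  rw [Nat.factorial_succ ((6 * q + 4) + 1), Nat.factorial_succ (6 * q + 4),
    Nat.factorial_succ (3 * q + 2), Nat.factorial_succ (2 * q + 1)]
  -- handle the zpow
  rw [show (-4 * (((q : ℕ) + 1 : ℕ) : ℤ) + 3) = -((4 * q + 1 : ℕ) : ℤ) from by push_cast; ring,
    zpow_neg, zpow_natCast]
  have h1 : ((Nat.factorial (6 * q + 4)) : ℝ) ≠ 0 := Nat.cast_ne_zero.mpr (Nat.factorial_ne_zero _)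
  have h2 : ((Nat.factorial (3 * q + 2)) : ℝ) ≠ 0 := Nat.cast_ne_zero.mpr (Nat.factorial_ne_zero _)
  have h3 : ((Nat.factorial (2 * q + 1)) : ℝ) ≠ 0 := Nat.cast_ne_zero.mpr (Nat.factorial_ne_zero _)
  have h4 : ((Nat.factorial (q + 1)) : ℝ) ≠ 0 := Nat.cast_ne_zero.mpr (Nat.factorial_ne_zero _)
  have h6 : (2 : ℝ) ^ (4 * q + 1) ≠ 0 := by positivity
  have h7 : (2 : ℝ) ^ (3 * q + 2) ≠ 0 := by positivity
  have h8 : (2 : ℝ) ^ (q + 1) ≠ 0 := by positivity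
  have h9 : (2 : ℝ) ^ (2 * q + 1) ≠ 0 := by positivity
  rw [show ((1 : ℝ) / 2 * (2 * ((q + 1 : ℕ) : ℝ) - 1) + 1) = (2 * (q : ℝ) + 3) / 2 from by
    push_cast; ring]
  rw [show (6 * ((q + 1 : ℕ) : ℝ) - 1) = (6 * (q : ℝ) + 5) from by push_cast; ring]
  rw [show (2 * ((q + 1 : ℕ) : ℝ) + 1) = (2 * (q : ℝ) + 3) from by push_cast; ring]
  have h10 : (6 * (q : ℝ) + 5) ≠ 0 := by positivity
  have h11 : (2 * (q : ℝ) + 3) ≠ 0 := by positivity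
  push_cast
  field_simp
  ring
end

section
/- For a formal power series f over a commutative ring containing t, with constant term 1, the functional equation f = 1 + z f^s (f + t - 1) (for a positive integer s) has a unique solution, and its k-th coefficient equals ∑_{b=1}^{k} (1/b) C(k-1, b-1) C(sk, b-1) t^b for k ≥ 1. -/
open Finset PowerSeries

noncomputable section FNProof

namespace FN

variable {K : Type*} [Field K] [CharZero K]

/-- The iteration map. -/
def Phi (s : ℕ) (f : PowerSeries (Polynomial ℚ)) : PowerSeries (Polynomial ℚ) :=
  1 + PowerSeries.X * f ^ s * (f + PowerSeries.C Polynomial.X - 1)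

lemma Phi_congr (s k : ℕ) (f f' : PowerSeries (Polynomial ℚ))
    (h : (PowerSeries.X : PowerSeries (Polynomial ℚ)) ^ k ∣ f - f') :
    (PowerSeries.X : PowerSeries (Polynomial ℚ)) ^ (k + 1) ∣ Phi s f - Phi s f' := by
  have key : (PowerSeries.X : PowerSeries (Polynomial ℚ)) ^ k ∣
      f ^ s * (f + PowerSeries.C Polynomial.X - 1) -
        f' ^ s * (f' + PowerSeries.C Polynomial.X - 1) := by
    have h1 : (PowerSeries.X : PowerSeries (Polynomial ℚ)) ^ k ∣ f ^ s - f' ^ s :=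
      dvd_trans h (sub_dvd_pow_sub_pow f f' s)
    have : f ^ s * (f + PowerSeries.C Polynomial.X - 1) -
        f' ^ s * (f' + PowerSeries.C Polynomial.X - 1) =
        f ^ s * (f - f') + (f' + PowerSeries.C Polynomial.X - 1) * (f ^ s - f' ^ s) := by
      ring
    rw [this]
    exact dvd_add (Dvd.dvd.mul_left h _) (Dvd.dvd.mul_left h1 _)
  have : Phi s f - Phi s f' = PowerSeries.X *
      (f ^ s * (f + PowerSeries.C Polynomial.X - 1) -
        f' ^ s * (f' + PowerSeries.C Polynomial.X - 1)) := by
    unfold Phi; ring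
  rw [this, pow_succ']
  exact mul_dvd_mul dvd_rfl key

/-- Iterates of `Phi` starting from `1`. -/
def FIt (s : ℕ) : ℕ → PowerSeries (Polynomial ℚ)
  | 0 => 1
  | m + 1 => Phi s (FIt s m)

lemma FIt_step (s m : ℕ) :
    (PowerSeries.X : PowerSeries (Polynomial ℚ)) ^ m ∣ FIt s (m + 1) - FIt s m := by
  induction m with
  | zero => simpa using dvd_refl _
  | succ m ih => exact Phi_congr s m _ _ ih

lemma FIt_agree (s : ℕ) {m m' : ℕ} (h : m ≤ m') :
    (PowerSeries.X : PowerSeries (Polynomial ℚ)) ^ m ∣ FIt s m' - FIt s m := by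
  induction m' with
  | zero => simpa [Nat.le_zero.mp h] using dvd_refl _
  | succ m' ih =>
    rcases Nat.lt_or_ge m (m' + 1) with hlt | hge
    · have h1 : (PowerSeries.X : PowerSeries (Polynomial ℚ)) ^ m ∣ FIt s m' - FIt s m :=
        ih (Nat.lt_succ_iff.mp hlt)
      have h2 : (PowerSeries.X : PowerSeries (Polynomial ℚ)) ^ m ∣ FIt s (m' + 1) - FIt s m' :=
        dvd_trans (pow_dvd_pow _ (Nat.lt_succ_iff.mp hlt)) (FIt_step s m')
      have := dvd_add h2 h1
      simpa using this
    · have : m = m' + 1 := le_antisymm h hge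
      subst this; simpa using dvd_refl _

/-- The solution. -/
def fsol (s : ℕ) : PowerSeries (Polynomial ℚ) :=
  PowerSeries.mk fun n => PowerSeries.coeff n (FIt s (n + 1))

lemma fsol_agree (s m : ℕ) :
    (PowerSeries.X : PowerSeries (Polynomial ℚ)) ^ m ∣ fsol s - FIt s m := by
  rw [PowerSeries.X_pow_dvd_iff]
  intro j hj
  have h1 : PowerSeries.coeff j (fsol s) =
      PowerSeries.coeff j (FIt s (j + 1)) := by
    simp [fsol]
  have h2 : (PowerSeries.X : PowerSeries (Polynomial ℚ)) ^ (j + 1) ∣ FIt s m - FIt s (j + 1) :=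
    FIt_agree s (Nat.succ_le_of_lt hj)
  have h3 : PowerSeries.coeff j (FIt s m - FIt s (j + 1)) = 0 :=
    PowerSeries.X_pow_dvd_iff.mp h2 j (Nat.lt_succ_self j)
  rw [map_sub, h1]
  rw [map_sub, sub_eq_zero] at h3
  rw [sub_eq_zero]
  exact h3.symm

lemma fsol_fixed (s : ℕ) : fsol s = Phi s (fsol s) := by
  ext n
  have h1 : PowerSeries.coeff n (fsol s) =
      PowerSeries.coeff n (FIt s (n + 1)) := by simp [fsol]
  have h2 : (PowerSeries.X : PowerSeries (Polynomial ℚ)) ^ (n + 1) ∣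
      Phi s (fsol s) - Phi s (FIt s n) := Phi_congr s n _ _ (fsol_agree s n)
  have h3 : PowerSeries.coeff n (Phi s (fsol s) - Phi s (FIt s n)) = 0 :=
    PowerSeries.X_pow_dvd_iff.mp h2 n (Nat.lt_succ_self n)
  rw [map_sub, sub_eq_zero] at h3
  rw [h1, h3]
  rfl

lemma fsol_const (s : ℕ) : PowerSeries.constantCoeff (fsol s) = 1 := by
  have := fsol_fixed s
  rw [this]
  unfold Phi
  simp [mul_assoc]


lemma key_vanish (Ψ w g : PowerSeries K)
    (hg : g = PowerSeries.X * Ψ) (hw : Ψ * w = 1) (m : ℕ) :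
    PowerSeries.coeff (m + 1) (w ^ (m + 2) * (PowerSeries.derivative K g)) = 0 := by
  have hdg : PowerSeries.derivative K g = Ψ + PowerSeries.X * PowerSeries.derivative K Ψ := by
    rw [hg, Derivation.leibniz]
    simp [smul_eq_mul, PowerSeries.derivative_X]
    ring
  have hrel : Ψ * PowerSeries.derivative K w + w * PowerSeries.derivative K Ψ = 0 := by
    have h0 : PowerSeries.derivative K (Ψ * w) = 0 := by rw [hw]; simp
    rw [Derivation.leibniz] at h0
    simpa [smul_eq_mul, mul_comm, add_comm] using h0
  have hw2 : w ^ 2 * PowerSeries.derivative K Ψ = - PowerSeries.derivative K w := by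
    have h1 : w * (Ψ * PowerSeries.derivative K w + w * PowerSeries.derivative K Ψ) = 0 := by
      rw [hrel, mul_zero]
    have h2 : (Ψ * w) * PowerSeries.derivative K w + w ^ 2 * PowerSeries.derivative K Ψ = 0 := by
      linear_combination h1
    rw [hw, one_mul] at h2
    linear_combination h2
  have hsplit : w ^ (m + 2) * (PowerSeries.derivative K g) =
      w ^ (m + 1) + PowerSeries.X * (- (w ^ m * PowerSeries.derivative K w)) := by
    rw [hdg]
    have e1 : w ^ (m + 2) * Ψ = w ^ (m + 1) * (Ψ * w) := by ring
    have e2 : w ^ (m + 2) * PowerSeries.derivative K Ψ =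
        w ^ m * (w ^ 2 * PowerSeries.derivative K Ψ) := by ring
    rw [mul_add, e1, hw, mul_one, ← mul_assoc, mul_comm (w ^ (m + 2)) PowerSeries.X, mul_assoc,
      e2, hw2]
    ring
  have hpow : PowerSeries.derivative K (w ^ (m + 1)) =
      (m + 1) • (w ^ m * PowerSeries.derivative K w) := by
    have := Derivation.leibniz_pow (PowerSeries.derivative K) w (m + 1)
    simpa [smul_eq_mul, smul_smul] using this
  have hc2 : ((m : K) + 1) * PowerSeries.coeff m (w ^ m * PowerSeries.derivative K w) =
      PowerSeries.coeff (m + 1) (w ^ (m + 1)) * ((m : K) + 1) := by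
    have h3 := PowerSeries.coeff_derivative (w ^ (m + 1)) m
    rw [hpow, map_nsmul] at h3
    have : (m + 1) • PowerSeries.coeff m (w ^ m * PowerSeries.derivative K w) =
        ((m : K) + 1) * PowerSeries.coeff m (w ^ m * PowerSeries.derivative K w) := by
      simp [nsmul_eq_mul]
    rw [this] at h3
    exact_mod_cast h3
  have hm1 : ((m : K) + 1) ≠ 0 := by
    have : ((m : K) + 1) = ((m + 1 : ℕ) : K) := by push_cast; ring
    rw [this]
    exact Nat.cast_ne_zero.mpr (Nat.succ_ne_zero m)
  have hc2' : PowerSeries.coeff m (w ^ m * PowerSeries.derivative K w) =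
      PowerSeries.coeff (m + 1) (w ^ (m + 1)) := by
    have := mul_left_cancel₀ hm1 (hc2.trans (by ring))
    exact this
  rw [hsplit, map_add, PowerSeries.coeff_succ_X_mul, map_neg, hc2']
  ring


lemma coeff_eqn (τ : K) (hτ : τ ≠ 0) (s : ℕ) (F : PowerSeries K)
    (hc : PowerSeries.constantCoeff F = 1)
    (heq : F = 1 + PowerSeries.X * F ^ s * (F + PowerSeries.C τ - 1))
    (n1 : ℕ) :
    ((n1 : K) + 1) * PowerSeries.coeff (n1 + 1) F =
      (((Polynomial.X + 1) ^ s * (Polynomial.X + Polynomial.C τ)) ^ (n1 + 1) :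
        Polynomial K).coeff n1 := by
  set Ψ : PowerSeries K := F ^ s * (F + PowerSeries.C τ - 1) with hΨdef
  set g : PowerSeries K := F - 1 with hgdef
  have hg : g = PowerSeries.X * Ψ := by
    rw [hgdef, hΨdef]
    nth_rewrite 1 [heq]
    ring
  have hΨ0 : PowerSeries.constantCoeff Ψ = τ := by
    rw [hΨdef]
    simp [map_mul, map_pow, map_sub, map_add, hc]
  have hU : IsUnit Ψ := PowerSeries.isUnit_iff_constantCoeff.mpr (by rw [hΨ0]; exact hτ.isUnit)
  obtain ⟨u, hu⟩ := hU
  set w : PowerSeries K := ↑u⁻¹ with hwdef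
  have hw : Ψ * w = 1 := by rw [← hu, hwdef]; exact_mod_cast u.mul_inv
  set P : Polynomial K :=
    ((Polynomial.X + 1) ^ s * (Polynomial.X + Polynomial.C τ)) ^ (n1 + 1) with hPdef
  have hP : Polynomial.aeval g P = Ψ ^ (n1 + 1) := by
    rw [hPdef, map_pow, map_mul, map_pow, map_add, map_add, Polynomial.aeval_X,
      Polynomial.aeval_C, map_one]
    congr 1
    have halg : algebraMap K (PowerSeries K) τ = PowerSeries.C τ := rfl
    rw [halg, hΨdef, hgdef]
    ring
  clear_value Ψ g w P
  have hone : (1 : PowerSeries K) =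
      (∑ i ∈ range (P.natDegree + 1), P.coeff i • g ^ i) * w ^ (n1 + 1) := by
    rw [← Polynomial.aeval_eq_sum_range, hP, ← mul_pow, hw, one_pow]
  have hmain : PowerSeries.derivative K g =
      ∑ i ∈ range (P.natDegree + 1),
        P.coeff i • (g ^ i * (w ^ (n1 + 1) * PowerSeries.derivative K g)) := by
    conv_lhs => rw [← one_mul (PowerSeries.derivative K g), hone]
    rw [mul_assoc, Finset.sum_mul]
    refine Finset.sum_congr rfl fun i _ => ?_
    rw [smul_mul_assoc]
  have hT : ∀ i, PowerSeries.coeff n1 (g ^ i * (w ^ (n1 + 1) * PowerSeries.derivative K g)) =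
      if i = n1 then 1 else 0 := by
    intro i
    have hgi : g ^ i * (w ^ (n1 + 1) * PowerSeries.derivative K g) =
        PowerSeries.X ^ i * (Ψ ^ i * (w ^ (n1 + 1) * PowerSeries.derivative K g)) := by
      rw [hg, mul_pow]; ring
    rw [hgi, PowerSeries.coeff_X_pow_mul']
    rcases lt_trichotomy i n1 with hlt | heqi | hgt
    · rw [if_pos hlt.le, if_neg (by omega)]
      obtain ⟨m, hm⟩ : ∃ m, n1 - i = m + 1 := ⟨n1 - i - 1, by omega⟩
      have hk : n1 + 1 = i + (m + 2) := by omega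
      have hprod : Ψ ^ i * (w ^ (n1 + 1) * PowerSeries.derivative K g) =
          (Ψ * w) ^ i * (w ^ (m + 2) * PowerSeries.derivative K g) := by
        rw [hk, pow_add, mul_pow]; ring
      rw [hm, hprod, hw, one_pow, one_mul]
      exact key_vanish Ψ w g hg hw m
    · subst heqi
      rw [if_pos le_rfl, if_pos rfl, Nat.sub_self]
      rw [PowerSeries.coeff_zero_eq_constantCoeff, map_mul, map_mul, map_pow, map_pow, hΨ0]
      have hcw : PowerSeries.constantCoeff w = τ⁻¹ := by
        have h5 := congrArg (PowerSeries.constantCoeff) hw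
        rw [map_mul, hΨ0, map_one] at h5
        field_simp
        linear_combination h5
      have hcd : PowerSeries.constantCoeff (PowerSeries.derivative K g) = τ := by
        rw [← PowerSeries.coeff_zero_eq_constantCoeff, PowerSeries.coeff_derivative]
        have h6 : PowerSeries.coeff (0 + 1) g = PowerSeries.coeff 0 Ψ := by
          rw [hg, PowerSeries.coeff_succ_X_mul]
        rw [h6, PowerSeries.coeff_zero_eq_constantCoeff, hΨ0]
        push_cast
        ring
      rw [hcw, hcd]
      rw [inv_pow]
      field_simp
      ring
    · rw [if_neg (by omega), if_neg (by omega)]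
  have hsum := congrArg (PowerSeries.coeff n1) hmain
  rw [map_sum] at hsum
  have hterm : ∀ i ∈ range (P.natDegree + 1),
      PowerSeries.coeff n1 (P.coeff i • (g ^ i * (w ^ (n1 + 1) * PowerSeries.derivative K g))) =
      if i = n1 then P.coeff i else 0 := by
    intro i _
    rw [map_smul, hT i, smul_eq_mul]
    split_ifs with h
    · rw [mul_one]
    · rw [mul_zero]
  rw [Finset.sum_congr rfl hterm, Finset.sum_ite_eq' (range (P.natDegree + 1)) n1 P.coeff]
    at hsum
  have hfinal : PowerSeries.coeff n1 (PowerSeries.derivative K g) = P.coeff n1 := by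
    rw [hsum]
    split_ifs with h
    · rfl
    · exact (Polynomial.coeff_eq_zero_of_natDegree_lt (by simp at h; omega)).symm
  have hdco : PowerSeries.coeff n1 (PowerSeries.derivative K g) =
      PowerSeries.coeff (n1 + 1) g * ((n1 : K) + 1) := by
    rw [PowerSeries.coeff_derivative]
  have hgF : PowerSeries.coeff (n1 + 1) g = PowerSeries.coeff (n1 + 1) F := by
    rw [hgdef, map_sub, PowerSeries.coeff_one, if_neg (Nat.succ_ne_zero n1), sub_zero]
  rw [← hfinal, hdco, hgF]
  ring


lemma coeffP (τ : K) (s n1 : ℕ) :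
    (((Polynomial.X + 1) ^ s * (Polynomial.X + Polynomial.C τ)) ^ (n1 + 1) :
        Polynomial K).coeff n1 =
    ∑ i ∈ range (n1 + 1),
      (Nat.choose (s * (n1 + 1)) i : K) * (Nat.choose (n1 + 1) (i + 1) : K) * τ ^ (i + 1) := by
  have h0 : (((Polynomial.X + 1) ^ s * (Polynomial.X + Polynomial.C τ)) ^ (n1 + 1) :
      Polynomial K) = (Polynomial.X + 1) ^ (s * (n1 + 1)) *
      (Polynomial.X + Polynomial.C τ) ^ (n1 + 1) := by
    rw [mul_pow, ← pow_mul]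
  rw [h0, Polynomial.coeff_mul, Finset.Nat.sum_antidiagonal_eq_sum_range_succ_mk]
  refine Finset.sum_congr rfl fun i hi => ?_
  have hi' : i ≤ n1 := by simpa using Nat.lt_succ_iff.mp (Finset.mem_range.mp hi)
  rw [Polynomial.coeff_X_add_one_pow, Polynomial.coeff_X_add_C_pow]
  have e1 : n1 + 1 - (n1 - i) = i + 1 := by omega
  have e2 : Nat.choose (n1 + 1) (n1 - i) = Nat.choose (n1 + 1) (i + 1) := by
    have := Nat.choose_symm (n := n1 + 1) (k := i + 1) (by omega)
    
    rw [show n1 + 1 - (i + 1) = n1 - i by omega] at this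
    exact this
  rw [e1, e2]
  ring


lemma formula (s : ℕ) (f : PowerSeries (Polynomial ℚ))
    (hc : PowerSeries.constantCoeff f = 1)
    (heq : f = 1 + PowerSeries.X * f ^ s * (f + PowerSeries.C Polynomial.X - 1))
    (k : ℕ) (hk : 1 ≤ k) :
    PowerSeries.coeff k f =
      ∑ b ∈ Finset.Icc 1 k,
        Polynomial.C ((1 / b : ℚ) * (Nat.choose (k - 1) (b - 1)) *
          (Nat.choose (s * k) (b - 1))) * Polynomial.X ^ b := by
  obtain ⟨n1, rfl⟩ : ∃ n1, k = n1 + 1 := ⟨k - 1, by omega⟩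
  set K' := FractionRing (Polynomial ℚ) with hK
  set ρ : Polynomial ℚ →+* K' := algebraMap (Polynomial ℚ) K' with hρ
  have hinj : Function.Injective ρ := IsFractionRing.injective _ _
  set τ : K' := ρ Polynomial.X with hτdef
  have hτ : τ ≠ 0 := by
    rw [hτdef, ← map_zero ρ]
    exact fun h => Polynomial.X_ne_zero (hinj h)
  set F := PowerSeries.map ρ f with hF
  have hcF : PowerSeries.constantCoeff F = 1 := by
    rw [hF, ← PowerSeries.coeff_zero_eq_constantCoeff, PowerSeries.coeff_map,
      PowerSeries.coeff_zero_eq_constantCoeff, hc, map_one]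
  have heqF : F = 1 + PowerSeries.X * F ^ s * (F + PowerSeries.C τ - 1) := by
    have h := congrArg (PowerSeries.map ρ) heq
    simpa only [map_add, map_mul, map_pow, map_one, map_sub, PowerSeries.map_X,
      PowerSeries.map_C, hF.symm, hτdef] using h
  have key := coeff_eqn τ hτ s F hcF heqF n1
  rw [coeffP] at key
  rw [hF, PowerSeries.coeff_map] at key
  have hn1 : ((n1 : K') + 1) ≠ 0 := by
    have : ((n1 : K') + 1) = ((n1 + 1 : ℕ) : K') := by push_cast; ring
    rw [this]
    exact Nat.cast_ne_zero.mpr (Nat.succ_ne_zero n1)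
  apply hinj
  apply mul_left_cancel₀ hn1
  rw [key]
  have hρC : ∀ q : ℚ, ρ (Polynomial.C q) = (q : K') := by
    intro q
    have h := map_ratCast (ρ.comp (Polynomial.C : ℚ →+* Polynomial ℚ)) q
    rw [Rat.cast_id] at h
    simpa only [RingHom.comp_apply] using h
  rw [map_sum]
  rw [← Finset.Ico_add_one_right_eq_Icc, Finset.sum_Ico_eq_sum_range]
  have hrange : n1 + 1 + 1 - 1 = n1 + 1 := by omega
  rw [hrange, Finset.mul_sum]
  refine Finset.sum_congr rfl fun i hi => ?_
  rw [map_mul, map_pow, hρC, ← hτdef]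
  have e1 : n1 + 1 - 1 = n1 := by omega
  have e2 : 1 + i - 1 = i := by omega
  rw [e1, e2]
  have hch : ((n1 + 1 : ℕ) : ℚ) * Nat.choose n1 i = Nat.choose (n1 + 1) (i + 1) * ((i + 1 : ℕ) : ℚ) := by
    exact_mod_cast congrArg (fun x : ℕ => (x : ℚ)) (Nat.add_one_mul_choose_eq n1 i)
  have hchK : ((n1 : K') + 1) * (1 / (1 + (i : K'))) * (Nat.choose n1 i : K') =
      (Nat.choose (n1 + 1) (i + 1) : K') := by
    have hi1 : ((1 : K') + i) ≠ 0 := by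
      have he : ((1 : K') + i) = ((i + 1 : ℕ) : K') := by push_cast; ring
      rw [he]; exact Nat.cast_ne_zero.mpr (Nat.succ_ne_zero i)
    have hch' : ((n1 : K') + 1) * (Nat.choose n1 i : K') =
        (Nat.choose (n1 + 1) (i + 1) : K') * ((i : K') + 1) := by
      have h2 := congrArg (fun x : ℚ => ((x : ℚ) : K')) hch
      push_cast at h2
      linear_combination h2
    rw [mul_one_div, div_mul_eq_mul_div, div_eq_iff hi1]
    linear_combination hch'
  push_cast
  linear_combination (-(τ ^ (i + 1) * ((Nat.choose (s * (n1 + 1)) i : K')))) * hchK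


end FN

end FNProof

/-- The functional equation `f = 1 + z f^s (f + t - 1)` over `ℚ[t][[z]]`, where
`t = Polynomial.X`, has a unique power-series solution with constant term `1`,
and its `k`-th coefficient is the Fuss–Narayana polynomial
`∑_{b=1}^k (1/b) C(k-1,b-1) C(sk,b-1) t^b`. -/
theorem fuss_narayana_series (s : ℕ) (hs : 0 < s) :
    (∃! f : PowerSeries (Polynomial ℚ),
      PowerSeries.constantCoeff f = 1 ∧
        f = 1 + PowerSeries.X * f ^ s * (f + PowerSeries.C Polynomial.X - 1)) ∧
      (∀ f : PowerSeries (Polynomial ℚ),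
        PowerSeries.constantCoeff f = 1 →
        f = 1 + PowerSeries.X * f ^ s * (f + PowerSeries.C Polynomial.X - 1) →
        ∀ k : ℕ, 1 ≤ k →
          PowerSeries.coeff k f =
            ∑ b ∈ Finset.Icc 1 k,
              Polynomial.C ((1 / b : ℚ) * (Nat.choose (k - 1) (b - 1)) *
                (Nat.choose (s * k) (b - 1))) * Polynomial.X ^ b) := by
  have hPhi : ∀ f : PowerSeries (Polynomial ℚ), FN.Phi s f =
      1 + PowerSeries.X * f ^ s * (f + PowerSeries.C Polynomial.X - 1) :=
    fun f => rfl
  have hform := FN.formula s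
  constructor
  · refine ⟨FN.fsol s, ⟨FN.fsol_const s, by rw [← hPhi]; exact FN.fsol_fixed s⟩, ?_⟩
    rintro y ⟨hy0, hyeq⟩
    refine PowerSeries.ext fun n => ?_
    cases n with
    | zero =>
      simp only [PowerSeries.coeff_zero_eq_constantCoeff]
      rw [hy0, FN.fsol_const s]
    | succ m =>
      rw [hform y hy0 hyeq (m + 1) (Nat.succ_le_succ (Nat.zero_le m)),
        hform (FN.fsol s) (FN.fsol_const s) (by rw [← hPhi]; exact FN.fsol_fixed s) (m + 1)
          (Nat.succ_le_succ (Nat.zero_le m))]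
  · exact hform
end
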